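/- For every positive integer m there is a constant C_m such that for all irrational θ, Y(mθ) ≤ m·Y(θ) + C_m, where Y is the Yoccoz–Brjuno function. -/

import Mathlib

open scoped ENNReal
open Classical

/-- The Gauss-map iterates of `θ`: `θ_0 = {θ}`, `θ_{n+1} = {1/θ_n}`. -/
noncomputable def gaussIter (θ : ℝ) : ℕ → ℝ
  | 0 => Int.fract θ
  | n + 1 => Int.fract (1 / gaussIter θ n)

/-- Yoccoz's Brjuno function `Y(θ) = ∑ θ_0⋯θ_{n-1} log(1/θ_n) ∈ (0, ∞]` for irrational
`θ`, and `Y(θ) = ∞` for rational `θ`. -/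
noncomputable def brjunoY (θ : ℝ) : ℝ≥0∞ :=
  if Irrational θ then
    ∑' n : ℕ,
      ENNReal.ofReal ((∏ i ∈ Finset.range n, gaussIter θ i) * Real.log (1 / gaussIter θ n))
  else ⊤

/-!
Write `q_n` for the continued-fraction denominators of `θ` and `β_n = θ_0 ⋯ θ_n`, so that
`1/2 ≤ β_{n-1} q_n ≤ 1`. Up to an error bounded independently of `θ`, `Y(θ)` is
`S(θ) = ∑ q_n⁻¹ log (q_{n+1} / q_n)`, the integral of `dt / (t Q_θ(t))` over `t ≥ 1`, where
`Q_θ(t)` is the last `q_n ≤ t`. Compare `S(mθ)` with `m S(θ)` on each overlap of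
`[q_k(mθ), q_{k+1}(mθ)]` with `[q_n(θ), q_{n+1}(θ)]`. Best approximation, applied once to `mθ`
and once to `θ`, gives `q_n(θ) ≤ m q_k(mθ)` unless `m θ_n ≥ 1`, and always
`q_{n-K}(θ) ≤ m q_k(mθ)` for `K = 2 log₂ m + 1`, because `β` halves every two steps.
When `m θ_n ≥ 1` we have `a_{n+1} ≤ m`, so these overlaps cost at most
`m log (m + 1) / q_{n-K}(θ)` each, and these costs sum to a bound independent of `θ`.
-/

open Finset Filter

namespace ENNReal

theorem tsum_le_of_add_two_le_half {f : ℕ → ℝ≥0∞} (hf : ∀ n, f (n + 2) ≤ f n / 2) :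
    ∑' n, f n ≤ 2 * (f 0 + f 1) := by
  have hdecay (i k : ℕ) : f (2 * k + i) ≤ f i * 2⁻¹ ^ k := by
    induction k with
    | zero => simp
    | succ k ih =>
      calc f (2 * (k + 1) + i) = f (2 * k + i + 2) := by ring_nf
        _ ≤ f (2 * k + i) / 2 := hf _
        _ ≤ f i * 2⁻¹ ^ k / 2 := by gcongr
        _ = f i * 2⁻¹ ^ (k + 1) := by rw [pow_succ, div_eq_mul_inv, mul_assoc]
  rw [← tsum_even_add_odd ENNReal.summable ENNReal.summable]
  calc ∑' k, f (2 * k) + ∑' k, f (2 * k + 1)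
      ≤ ∑' k, f 0 * 2⁻¹ ^ k + ∑' k, f 1 * 2⁻¹ ^ k :=
        add_le_add (ENNReal.tsum_le_tsum fun k => hdecay 0 k)
          (ENNReal.tsum_le_tsum fun k => hdecay 1 k)
    _ = 2 * (f 0 + f 1) := by
        rw [ENNReal.tsum_mul_left, ENNReal.tsum_mul_left, ENNReal.tsum_geometric,
          ENNReal.one_sub_inv_two, inv_inv]
        ring

theorem tsum_comp_sub (f : ℕ → ℝ≥0∞) (K : ℕ) : ∑' n, f (n - K) = K * f 0 + ∑' n, f n := by
  rw [← ENNReal.summable.sum_add_tsum_nat_add' (k := K),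
    sum_congr rfl fun i hi => by rw [Nat.sub_eq_zero_of_le (mem_range.1 hi).le]]
  simp

/-- The intervals `[v k, v (k + 1)]` tile `[v 0, ∞)`, so their overlaps with `[a, b]` add up
to the length of `[a, b]`. -/
theorem tsum_ofReal_min_sub_max {v : ℕ → ℝ} (hv : Monotone v) (hv_top : Tendsto v atTop atTop)
    {a b : ℝ} (ha : v 0 ≤ a) (hab : a ≤ b) :
    ∑' k, ENNReal.ofReal (min (v (k + 1)) b - max (v k) a) = ENNReal.ofReal (b - a) := by
  set c : ℝ → ℝ := fun x => max a (min x b)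
  have hc : Monotone c := fun x y hxy => max_le_max le_rfl (min_le_min hxy le_rfl)
  have hterm (k : ℕ) : ENNReal.ofReal (min (v (k + 1)) b - max (v k) a)
      = ENNReal.ofReal (c (v (k + 1)) - c (v k)) := by
    have hk := hv (Nat.le_succ k)
    rcases le_or_gt (min (v (k + 1)) b - max (v k) a) 0 with h | h
    · rw [ENNReal.ofReal_of_nonpos h, ENNReal.ofReal_of_nonpos]
      simp only [c, min_def, max_def] at h ⊢
      split_ifs at h ⊢ <;> linarith
    · congr 1
      simp only [c, min_def, max_def] at h ⊢
      split_ifs at h ⊢ <;> linarith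
  have hpartial (K : ℕ) : ∑ k ∈ range K, ENNReal.ofReal (min (v (k + 1)) b - max (v k) a)
      = ENNReal.ofReal (c (v K) - a) := by
    simp_rw [hterm]
    rw [← ENNReal.ofReal_sum_of_nonneg fun k _ => sub_nonneg.2 (hc (hv (Nat.le_succ k))),
      sum_range_sub (fun k => c (v k))]
    simp [c, ha]
  refine tendsto_nhds_unique ENNReal.summable.hasSum.tendsto_sum_nat ?_
  simp_rw [hpartial]
  refine tendsto_const_nhds.congr' ?_
  filter_upwards [hv_top.eventually_ge_atTop b] with K hK
  simp [c, hK, hab]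

theorem tsum_ofReal_mul_min_sub_max_le {v x : ℕ → ℝ} (hv : Monotone v)
    (hv_top : Tendsto v atTop atTop) {a b c : ℝ} (ha : v 0 ≤ a) (hab : a ≤ b)
    (hx : ∀ k, a < v (k + 1) → x k ≤ c) :
    ∑' k, ENNReal.ofReal (x k) * ENNReal.ofReal (min (v (k + 1)) b - max (v k) a)
      ≤ ENNReal.ofReal c * ENNReal.ofReal (b - a) := by
  rw [← tsum_ofReal_min_sub_max hv hv_top ha hab, ← ENNReal.tsum_mul_left]
  refine ENNReal.tsum_le_tsum fun k => ?_
  rcases le_or_gt (min (v (k + 1)) b - max (v k) a) 0 with h | h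
  · simp [ENNReal.ofReal_of_nonpos h]
  · gcongr
    exact hx k <| (le_max_right _ _).trans_lt ((sub_pos.1 h).trans_le (min_le_left _ _))

end ENNReal

/-! In the paper's notation `gaussProd ξ n = β_{n-1}`, `partialQuot ξ n = a_{n+1}`,
`cfDen ξ n = q_{n-1}` and `cfNum ξ n = p_{n-1}`, so that index `0` holds `β_{-1} = 1`,
`q_{-1} = 0` and `p_{-1} = 1`; but `logDen ξ n = log q_n` and `denSum ξ = S(ξ)`. -/

noncomputable def gaussProd (ξ : ℝ) (n : ℕ) : ℝ := ∏ i ∈ range n, gaussIter ξ i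

noncomputable def partialQuot (ξ : ℝ) (n : ℕ) : ℤ := ⌊1 / gaussIter ξ n⌋

noncomputable def cfDen (ξ : ℝ) : ℕ → ℤ
  | 0 => 0
  | 1 => 1
  | n + 2 => partialQuot ξ n * cfDen ξ (n + 1) + cfDen ξ n

noncomputable def cfNum (ξ : ℝ) : ℕ → ℤ
  | 0 => 1
  | 1 => ⌊ξ⌋
  | n + 2 => partialQuot ξ n * cfNum ξ (n + 1) + cfNum ξ n

noncomputable def logDen (ξ : ℝ) (n : ℕ) : ℝ := Real.log (cfDen ξ (n + 1))

noncomputable def denSum (ξ : ℝ) : ℝ≥0∞ :=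
  ∑' n, ENNReal.ofReal ((cfDen ξ (n + 1) : ℝ)⁻¹ * (logDen ξ (n + 1) - logDen ξ n))

section GaussMap

variable {ξ : ℝ}

theorem irrational_gaussIter (hξ : Irrational ξ) : ∀ n, Irrational (gaussIter ξ n)
  | 0 => hξ.sub_intCast ⌊ξ⌋
  | n + 1 => (one_div (gaussIter ξ n) ▸ (irrational_gaussIter hξ n).inv).sub_intCast _

theorem gaussIter_pos (hξ : Irrational ξ) (n : ℕ) : 0 < gaussIter ξ n := by
  refine lt_of_le_of_ne ?_ (irrational_gaussIter hξ n).ne_zero.symm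
  cases n <;> exact Int.fract_nonneg _

theorem gaussIter_lt_one (ξ : ℝ) : ∀ n, gaussIter ξ n < 1
  | 0 => Int.fract_lt_one _
  | _ + 1 => Int.fract_lt_one _

theorem gaussIter_succ (ξ : ℝ) (n : ℕ) :
    gaussIter ξ (n + 1) = 1 / gaussIter ξ n - partialQuot ξ n := rfl

theorem one_le_partialQuot (hξ : Irrational ξ) (n : ℕ) : 1 ≤ partialQuot ξ n := by
  rw [partialQuot, Int.le_floor, Int.cast_one, le_one_div one_pos (gaussIter_pos hξ n),
    one_div_one]
  exact (gaussIter_lt_one ξ n).le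

theorem gaussIter_mul_gaussIter_succ_le (hξ : Irrational ξ) (n : ℕ) :
    gaussIter ξ n * gaussIter ξ (n + 1) ≤ 1 / 2 := by
  have hpos := gaussIter_pos hξ n
  have ha : (1 : ℝ) ≤ partialQuot ξ n := mod_cast one_le_partialQuot hξ n
  have hprod : gaussIter ξ n * gaussIter ξ (n + 1) = 1 - partialQuot ξ n * gaussIter ξ n := by
    rw [gaussIter_succ]; field_simp
  rcases le_or_gt (gaussIter ξ n) (1 / 2) with h | h
  · nlinarith [gaussIter_lt_one ξ (n + 1), gaussIter_pos hξ (n + 1)]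
  · nlinarith

theorem gaussProd_zero (ξ : ℝ) : gaussProd ξ 0 = 1 := prod_range_zero _

theorem gaussProd_succ (ξ : ℝ) (n : ℕ) : gaussProd ξ (n + 1) = gaussProd ξ n * gaussIter ξ n :=
  prod_range_succ _ _

theorem gaussProd_pos (hξ : Irrational ξ) (n : ℕ) : 0 < gaussProd ξ n :=
  prod_pos fun i _ => gaussIter_pos hξ i

theorem gaussProd_succ_le (hξ : Irrational ξ) (n : ℕ) : gaussProd ξ (n + 1) ≤ gaussProd ξ n := by
  rw [gaussProd_succ]
  exact mul_le_of_le_one_right (gaussProd_pos hξ n).le (gaussIter_lt_one ξ n).le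

theorem gaussProd_add_two (hξ : Irrational ξ) (n : ℕ) :
    gaussProd ξ (n + 2) = gaussProd ξ n - partialQuot ξ n * gaussProd ξ (n + 1) := by
  have := (gaussIter_pos hξ n).ne'
  rw [gaussProd_succ, gaussProd_succ, gaussIter_succ]
  field_simp

theorem gaussProd_add_two_le (hξ : Irrational ξ) (n : ℕ) :
    gaussProd ξ (n + 2) ≤ gaussProd ξ n / 2 := by
  rw [gaussProd_succ, gaussProd_succ, mul_assoc]
  nlinarith [gaussIter_mul_gaussIter_succ_le hξ n, gaussProd_pos hξ n]

theorem pow_mul_gaussProd_le (hξ : Irrational ξ) (j s : ℕ) :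
    2 ^ s * gaussProd ξ (j + 2 * s) ≤ gaussProd ξ j := by
  induction s with
  | zero => simp
  | succ s ih =>
    have := gaussProd_add_two_le hξ (j + 2 * s)
    rw [show j + 2 * (s + 1) = j + 2 * s + 2 by ring, pow_succ]
    nlinarith [pow_pos (two_pos (α := ℝ)) s]

theorem tsum_gaussProd_le (hξ : Irrational ξ) : ∑' n, ENNReal.ofReal (gaussProd ξ n) ≤ 4 := by
  have hhalf (n : ℕ) :
      ENNReal.ofReal (gaussProd ξ (n + 2)) ≤ ENNReal.ofReal (gaussProd ξ n) / 2 := by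
    rw [← ENNReal.ofReal_ofNat 2, ← ENNReal.ofReal_div_of_pos two_pos]
    exact ENNReal.ofReal_le_ofReal (gaussProd_add_two_le hξ n)
  have h1 : ENNReal.ofReal (gaussProd ξ 1) ≤ 1 :=
    ENNReal.ofReal_le_one.2 ((gaussProd_succ_le hξ 0).trans (gaussProd_zero ξ).le)
  calc ∑' n, ENNReal.ofReal (gaussProd ξ n)
      ≤ 2 * (ENNReal.ofReal (gaussProd ξ 0) + ENNReal.ofReal (gaussProd ξ 1)) :=
        ENNReal.tsum_le_of_add_two_le_half hhalf
    _ ≤ 2 * (1 + 1) := by rw [gaussProd_zero, ENNReal.ofReal_one]; gcongr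
    _ = 4 := by norm_num

end GaussMap

section Convergents

variable {ξ : ℝ}

@[simp] theorem cfDen_zero (ξ : ℝ) : cfDen ξ 0 = 0 := rfl

@[simp] theorem cfDen_one (ξ : ℝ) : cfDen ξ 1 = 1 := rfl

theorem cfDen_add_two (ξ : ℝ) (n : ℕ) :
    cfDen ξ (n + 2) = partialQuot ξ n * cfDen ξ (n + 1) + cfDen ξ n := rfl

theorem cfNum_add_two (ξ : ℝ) (n : ℕ) :
    cfNum ξ (n + 2) = partialQuot ξ n * cfNum ξ (n + 1) + cfNum ξ n := rfl

theorem cfDen_nonneg_and_le_succ (hξ : Irrational ξ) :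
    ∀ n, 0 ≤ cfDen ξ n ∧ cfDen ξ n ≤ cfDen ξ (n + 1)
  | 0 => by simp
  | n + 1 => by
    obtain ⟨h0, h1⟩ := cfDen_nonneg_and_le_succ hξ n
    have ha := one_le_partialQuot hξ n
    refine ⟨h0.trans h1, ?_⟩
    rw [cfDen_add_two]
    nlinarith

theorem cfDen_nonneg (hξ : Irrational ξ) (n : ℕ) : 0 ≤ cfDen ξ n :=
  (cfDen_nonneg_and_le_succ hξ n).1

theorem cfDen_monotone (hξ : Irrational ξ) : Monotone (cfDen ξ) :=
  monotone_nat_of_le_succ fun n => (cfDen_nonneg_and_le_succ hξ n).2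

theorem one_le_cfDen_succ (hξ : Irrational ξ) (n : ℕ) : 1 ≤ cfDen ξ (n + 1) :=
  cfDen_monotone hξ (Nat.le_add_left 1 n)

theorem natCast_le_cfDen_succ (hξ : Irrational ξ) : ∀ n : ℕ, (n : ℤ) ≤ cfDen ξ (n + 1)
  | 0 => by simp
  | 1 => by simpa using one_le_cfDen_succ hξ 1
  | n + 2 => by
    have := natCast_le_cfDen_succ hξ (n + 1)
    have := one_le_cfDen_succ hξ n
    have := one_le_partialQuot hξ (n + 1)
    rw [cfDen_add_two]
    push_cast at *
    nlinarith

theorem partialQuot_mul_cfDen_le (hξ : Irrational ξ) (n : ℕ) :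
    partialQuot ξ n * cfDen ξ (n + 1) ≤ cfDen ξ (n + 2) := by
  rw [cfDen_add_two]; linarith [cfDen_nonneg hξ n]

theorem cfDen_le_partialQuot_add_one_mul (hξ : Irrational ξ) (n : ℕ) :
    cfDen ξ (n + 2) ≤ (partialQuot ξ n + 1) * cfDen ξ (n + 1) := by
  rw [cfDen_add_two]; linarith [(cfDen_nonneg_and_le_succ hξ n).2]

theorem gaussProd_mul_cfDen_succ_add (hξ : Irrational ξ) :
    ∀ n, gaussProd ξ n * cfDen ξ (n + 1) + gaussProd ξ (n + 1) * cfDen ξ n = 1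
  | 0 => by simp [gaussProd_zero]
  | n + 1 => by
    have ih := gaussProd_mul_cfDen_succ_add hξ n
    rw [cfDen_add_two, gaussProd_add_two hξ]
    push_cast
    linear_combination ih

theorem cfDen_mul_sub_cfNum (hξ : Irrational ξ) :
    ∀ n, cfDen ξ n * ξ - cfNum ξ n = (-1) ^ (n + 1) * gaussProd ξ n
  | 0 => by simp [gaussProd_zero, cfNum]
  | 1 => by simp [gaussProd_succ, gaussProd_zero, cfNum, gaussIter, Int.self_sub_floor]
  | n + 2 => by
    rw [cfDen_add_two, cfNum_add_two, gaussProd_add_two hξ]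
    push_cast
    linear_combination (partialQuot ξ n : ℝ) * cfDen_mul_sub_cfNum hξ (n + 1)
      + cfDen_mul_sub_cfNum hξ n

theorem abs_cfDen_mul_sub_cfNum (hξ : Irrational ξ) (n : ℕ) :
    |cfDen ξ n * ξ - cfNum ξ n| = gaussProd ξ n := by
  rw [cfDen_mul_sub_cfNum hξ, abs_mul, abs_pow, abs_neg, abs_one, one_pow, one_mul,
    abs_of_pos (gaussProd_pos hξ n)]

theorem cfNum_mul_cfDen_sub : ∀ n,
    cfNum ξ (n + 1) * cfDen ξ n - cfNum ξ n * cfDen ξ (n + 1) = (-1) ^ (n + 1)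
  | 0 => by simp [cfNum]
  | n + 1 => by
    rw [cfDen_add_two, cfNum_add_two]
    linear_combination (-1 : ℤ) * cfNum_mul_cfDen_sub n

theorem gaussProd_le_abs_mul_sub (hξ : Irrational ξ) {n : ℕ} {P R : ℤ} (hP : 1 ≤ P)
    (hPn : P < cfDen ξ (n + 1)) : gaussProd ξ n ≤ |P * ξ - R| := by
  -- Write `(P, R) = u (q_{n-1}, p_{n-1}) + v (q_n, p_n)`, possible since the determinant is `±1`.
  -- As `0 < P < q_n`, `u ≠ 0` and `u, v` have opposite signs, while the errors
  -- `q_{n-1} ξ - p_{n-1}` and `q_n ξ - p_n` alternate in sign: they cannot cancel.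
  set σ : ℤ := (-1) ^ (n + 1)
  have hσ : σ * σ = 1 := by rw [← mul_pow]; norm_num
  have hdet := cfNum_mul_cfDen_sub (ξ := ξ) n
  set u := σ * (P * cfNum ξ (n + 1) - R * cfDen ξ (n + 1))
  set v := σ * (R * cfDen ξ n - P * cfNum ξ n)
  have hPuv : P = u * cfDen ξ n + v * cfDen ξ (n + 1) := by
    linear_combination (-σ * P) * hdet - P * hσ
  have hRuv : R = u * cfNum ξ n + v * cfNum ξ (n + 1) := by
    linear_combination (-σ * R) * hdet - R * hσ
  have hdiff : P * ξ - R = σ * (u * gaussProd ξ n - v * gaussProd ξ (n + 1)) := by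
    have h0 := cfDen_mul_sub_cfNum hξ n
    have h1 := cfDen_mul_sub_cfNum hξ (n + 1)
    rw [hPuv, hRuv]
    simp only [σ] at h0 h1 ⊢
    push_cast
    linear_combination (u : ℝ) * h0 + (v : ℝ) * h1
  have hsigns : (1 ≤ u ∧ v ≤ 0) ∨ (u ≤ -1 ∧ 0 ≤ v) := by
    have h0 := cfDen_nonneg hξ n
    have h01 := (cfDen_nonneg_and_le_succ hξ n).2
    rcases lt_trichotomy v 0 with hv | hv | hv
    · exact Or.inl ⟨by nlinarith, hv.le⟩
    · rw [hv] at hPuv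
      exact Or.inl ⟨by nlinarith, hv.le⟩
    · exact Or.inr ⟨by nlinarith, hv.le⟩
  have hB0 := gaussProd_pos hξ n
  have hB1 := gaussProd_pos hξ (n + 1)
  rw [hdiff, abs_mul, show |(σ : ℝ)| = 1 by simp [σ], one_mul]
  rcases hsigns with ⟨hu, hv⟩ | ⟨hu, hv⟩
  · have hu' : (1 : ℝ) ≤ u := mod_cast hu
    have hv' : (v : ℝ) ≤ 0 := mod_cast hv
    exact le_abs.2 (Or.inl (by nlinarith))
  · have hu' : (u : ℝ) ≤ -1 := mod_cast hu
    have hv' : (0 : ℝ) ≤ v := mod_cast hv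
    exact le_abs.2 (Or.inr (by nlinarith))

end Convergents

section DenSum

variable {ξ : ℝ}

theorem logDen_zero (ξ : ℝ) : logDen ξ 0 = 0 := by simp [logDen]

theorem logDen_nonneg (hξ : Irrational ξ) (n : ℕ) : 0 ≤ logDen ξ n :=
  Real.log_nonneg (mod_cast one_le_cfDen_succ hξ n)

theorem monotone_logDen (hξ : Irrational ξ) : Monotone (logDen ξ) := fun a b hab =>
  Real.log_le_log (mod_cast one_le_cfDen_succ hξ a) (mod_cast cfDen_monotone hξ (by omega))

theorem tendsto_logDen (hξ : Irrational ξ) : Tendsto (logDen ξ) atTop atTop :=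
  Real.tendsto_log_atTop.comp <|
    tendsto_atTop_mono (fun n => mod_cast natCast_le_cfDen_succ hξ n) tendsto_natCast_atTop_atTop

theorem brjunoY_eq_tsum (hξ : Irrational ξ) :
    brjunoY ξ = ∑' n, ENNReal.ofReal (gaussProd ξ n * Real.log (1 / gaussIter ξ n)) := by
  rw [brjunoY, if_pos hξ]; rfl

theorem gaussProd_le_inv_cfDen_succ (hξ : Irrational ξ) (n : ℕ) :
    gaussProd ξ n ≤ (cfDen ξ (n + 1) : ℝ)⁻¹ := by
  have h0 : (0 : ℝ) ≤ cfDen ξ n := mod_cast cfDen_nonneg hξ n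
  rw [← one_div, le_div_iff₀ (mod_cast one_le_cfDen_succ hξ n)]
  linarith [gaussProd_mul_cfDen_succ_add hξ n, mul_nonneg (gaussProd_pos hξ (n + 1)).le h0]

theorem inv_cfDen_succ_le (hξ : Irrational ξ) (n : ℕ) :
    (cfDen ξ (n + 1) : ℝ)⁻¹ ≤ gaussProd ξ n + gaussProd ξ (n + 1) := by
  have hq : (0 : ℝ) < cfDen ξ (n + 1) := mod_cast one_le_cfDen_succ hξ n
  have hle : (cfDen ξ n : ℝ) ≤ cfDen ξ (n + 1) := mod_cast (cfDen_nonneg_and_le_succ hξ n).2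
  rw [inv_le_iff_one_le_mul₀ hq]
  nlinarith [gaussProd_mul_cfDen_succ_add hξ n, gaussProd_pos hξ (n + 1)]

theorem tsum_inv_cfDen_succ_le (hξ : Irrational ξ) :
    ∑' n, ENNReal.ofReal ((cfDen ξ (n + 1) : ℝ)⁻¹) ≤ 8 :=
  calc ∑' n, ENNReal.ofReal ((cfDen ξ (n + 1) : ℝ)⁻¹)
      ≤ ∑' n, 2 * ENNReal.ofReal (gaussProd ξ n) := ENNReal.tsum_le_tsum fun n => by
        rw [← ENNReal.ofReal_ofNat 2, ← ENNReal.ofReal_mul zero_le_two]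
        exact ENNReal.ofReal_le_ofReal
          (by linarith [inv_cfDen_succ_le hξ n, gaussProd_succ_le hξ n])
    _ ≤ 2 * 4 := by rw [ENNReal.tsum_mul_left]; gcongr; exact tsum_gaussProd_le hξ
    _ = 8 := by norm_num

theorem log_one_div_gaussIter_nonneg (hξ : Irrational ξ) (n : ℕ) :
    0 ≤ Real.log (1 / gaussIter ξ n) :=
  Real.log_nonneg ((one_le_div (gaussIter_pos hξ n)).2 (gaussIter_lt_one ξ n).le)

/-- Both `q_{n+1} / q_n` and `1 / θ_n` lie in `[a_{n+1}, a_{n+1} + 1] ⊆ [a_{n+1}, 2 a_{n+1}]`. -/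
theorem abs_logDen_succ_sub_logDen_sub_log_le (hξ : Irrational ξ) (n : ℕ) :
    |logDen ξ (n + 1) - logDen ξ n - Real.log (1 / gaussIter ξ n)| ≤ Real.log 2 := by
  have hq : (0 : ℝ) < cfDen ξ (n + 1) := mod_cast one_le_cfDen_succ hξ n
  have hq2 : (0 : ℝ) < cfDen ξ (n + 2) := mod_cast one_le_cfDen_succ hξ (n + 1)
  have hq_lo : (partialQuot ξ n : ℝ) * cfDen ξ (n + 1) ≤ cfDen ξ (n + 2) :=
    mod_cast partialQuot_mul_cfDen_le hξ n
  have hq_hi : (cfDen ξ (n + 2) : ℝ) ≤ (partialQuot ξ n + 1) * cfDen ξ (n + 1) :=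
    mod_cast cfDen_le_partialQuot_add_one_mul hξ n
  have ha : (1 : ℝ) ≤ partialQuot ξ n := mod_cast one_le_partialQuot hξ n
  have ht_lo : (partialQuot ξ n : ℝ) ≤ 1 / gaussIter ξ n := Int.floor_le _
  have ht_hi : 1 / gaussIter ξ n ≤ partialQuot ξ n + 1 := (Int.lt_floor_add_one _).le
  set r := (cfDen ξ (n + 2) : ℝ) / cfDen ξ (n + 1)
  set t := 1 / gaussIter ξ n
  have hr_lo : (partialQuot ξ n : ℝ) ≤ r := (le_div_iff₀ hq).2 hq_lo
  have hr_hi : r ≤ partialQuot ξ n + 1 := (div_le_iff₀ hq).2 hq_hi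
  have hlog {x y : ℝ} (hx : 0 < x) (hy : 0 < y) (hxy : x ≤ 2 * y) :
      Real.log x - Real.log y ≤ Real.log 2 := by
    have := Real.log_le_log hx hxy
    rw [Real.log_mul two_ne_zero hy.ne'] at this
    linarith
  rw [logDen, logDen, ← Real.log_div hq2.ne' hq.ne', abs_sub_le_iff]
  exact ⟨hlog (by linarith) (by linarith) (by linarith),
    hlog (by linarith) (by linarith) (by linarith)⟩

theorem tsum_ofReal_le_of_le_add_gaussProd (hξ : Irrational ξ) {x y : ℕ → ℝ} {c : ℝ}
    (hc : 0 ≤ c) (hxy : ∀ n, x n ≤ y n + c * gaussProd ξ n) :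
    ∑' n, ENNReal.ofReal (x n) ≤ ∑' n, ENNReal.ofReal (y n) + ENNReal.ofReal c * 4 :=
  calc ∑' n, ENNReal.ofReal (x n)
      ≤ ∑' n, (ENNReal.ofReal (y n) + ENNReal.ofReal c * ENNReal.ofReal (gaussProd ξ n)) :=
        ENNReal.tsum_le_tsum fun n => by
          rw [← ENNReal.ofReal_mul hc]
          exact (ENNReal.ofReal_le_ofReal (hxy n)).trans ENNReal.ofReal_add_le
    _ ≤ ∑' n, ENNReal.ofReal (y n) + ENNReal.ofReal c * 4 := by
        rw [ENNReal.tsum_add, ENNReal.tsum_mul_left]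
        gcongr
        exact tsum_gaussProd_le hξ

theorem brjunoY_le_denSum (hξ : Irrational ξ) : brjunoY ξ ≤ denSum ξ + 4 := by
  rw [brjunoY_eq_tsum hξ, denSum]
  convert tsum_ofReal_le_of_le_add_gaussProd hξ zero_le_one fun n => ?_ using 2
  · simp
  have hΔ : 0 ≤ logDen ξ (n + 1) - logDen ξ n := sub_nonneg.2 (monotone_logDen hξ n.le_succ)
  have hlog := (abs_sub_le_iff.1 (abs_logDen_succ_sub_logDen_sub_log_le hξ n)).2
  have hlog2 : Real.log 2 ≤ 1 := by linarith [Real.log_two_lt_d9]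
  have hB := gaussProd_pos hξ n
  calc gaussProd ξ n * Real.log (1 / gaussIter ξ n)
      ≤ gaussProd ξ n * (logDen ξ (n + 1) - logDen ξ n) + gaussProd ξ n * Real.log 2 := by
        rw [← mul_add]; gcongr; linarith
    _ ≤ (cfDen ξ (n + 1) : ℝ)⁻¹ * (logDen ξ (n + 1) - logDen ξ n) + 1 * gaussProd ξ n :=
        add_le_add (mul_le_mul_of_nonneg_right (gaussProd_le_inv_cfDen_succ hξ n) hΔ)
          (by nlinarith)

theorem denSum_le_brjunoY (hξ : Irrational ξ) : denSum ξ ≤ brjunoY ξ + 12 := by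
  rw [brjunoY_eq_tsum hξ, denSum]
  convert tsum_ofReal_le_of_le_add_gaussProd hξ (by norm_num : (0 : ℝ) ≤ 3) fun n => ?_ using 2
  · rw [ENNReal.ofReal_ofNat]; norm_num
  have hΔ : 0 ≤ logDen ξ (n + 1) - logDen ξ n := sub_nonneg.2 (monotone_logDen hξ n.le_succ)
  have hlog := (abs_sub_le_iff.1 (abs_logDen_succ_sub_logDen_sub_log_le hξ n)).1
  have hlog2 : Real.log 2 ≤ 1 := by linarith [Real.log_two_lt_d9]
  have hB := gaussProd_pos hξ n
  have hB1 := gaussProd_pos hξ (n + 1)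
  have hL := log_one_div_gaussIter_nonneg hξ n
  have hα := gaussIter_pos hξ n
  have hα_log : gaussIter ξ n * Real.log (1 / gaussIter ξ n) ≤ 1 := by
    have := Real.log_le_sub_one_of_pos (one_div_pos.2 hα)
    have h1 : gaussIter ξ n * (1 / gaussIter ξ n) = 1 := by field_simp
    nlinarith
  have hB1_log : gaussProd ξ (n + 1) * Real.log (1 / gaussIter ξ n) ≤ gaussProd ξ n := by
    rw [gaussProd_succ, mul_assoc]
    exact mul_le_of_le_one_right hB.le hα_log
  calc (cfDen ξ (n + 1) : ℝ)⁻¹ * (logDen ξ (n + 1) - logDen ξ n)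
      ≤ (gaussProd ξ n + gaussProd ξ (n + 1)) * (Real.log (1 / gaussIter ξ n) + Real.log 2) :=
        mul_le_mul (inv_cfDen_succ_le hξ n) (by linarith) hΔ (by positivity)
    _ = gaussProd ξ n * Real.log (1 / gaussIter ξ n) + (gaussProd ξ n * Real.log 2
          + gaussProd ξ (n + 1) * Real.log (1 / gaussIter ξ n)
          + gaussProd ξ (n + 1) * Real.log 2) := by ring
    _ ≤ gaussProd ξ n * Real.log (1 / gaussIter ξ n) + 3 * gaussProd ξ n := by
        have := gaussProd_succ_le hξ n
        gcongr
        nlinarith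

end DenSum

section Multiple

variable {θ : ℝ} {m : ℕ}

theorem cfDen_le_natCast_mul_cfDen (hθ : Irrational θ) (hm : m ≠ 0) {n k j : ℕ}
    (hnk : cfDen θ (n + 1) < cfDen (m * θ) (k + 2))
    (hj : m * gaussProd θ (n + 1) < gaussProd θ j) :
    cfDen θ (j + 1) ≤ m * cfDen (m * θ) (k + 1) := by
  -- `q_n(θ)` approximates `mθ` to within `m β_n(θ)`, and `m q_k(mθ)` approximates `θ` to within
  -- `β_k(mθ)`; best approximation for `mθ`, then for `θ`.
  have hmθ : Irrational (m * θ) := hθ.natCast_mul hm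
  have hmk : gaussProd (m * θ) (k + 1) ≤ m * gaussProd θ (n + 1) := by
    have := gaussProd_le_abs_mul_sub hmθ (R := m * cfNum θ (n + 1)) (one_le_cfDen_succ hθ n) hnk
    rwa [show ((cfDen θ (n + 1) : ℤ) : ℝ) * (m * θ) - ((m * cfNum θ (n + 1) : ℤ) : ℝ)
        = m * (cfDen θ (n + 1) * θ - cfNum θ (n + 1)) by push_cast; ring,
      abs_mul, Nat.abs_cast, abs_cfDen_mul_sub_cfNum hθ] at this
  by_contra! h
  have hP : 1 ≤ (m : ℤ) * cfDen (m * θ) (k + 1) :=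
    one_le_mul_of_one_le_of_one_le (by omega) (one_le_cfDen_succ hmθ k)
  have := gaussProd_le_abs_mul_sub hθ (R := cfNum (m * θ) (k + 1)) hP h
  rw [show (((m : ℤ) * cfDen (m * θ) (k + 1) : ℤ) : ℝ) * θ - cfNum (m * θ) (k + 1)
      = cfDen (m * θ) (k + 1) * (m * θ) - cfNum (m * θ) (k + 1) by push_cast; ring,
    abs_cfDen_mul_sub_cfNum hmθ] at this
  linarith

theorem natCast_mul_gaussProd_lt (hθ : Irrational θ) (m : ℕ) {n : ℕ}
    (hn : 2 * Nat.log 2 m + 1 ≤ n) :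
    m * gaussProd θ (n + 1) < gaussProd θ (n - (2 * Nat.log 2 m + 1)) := by
  have hdecay := pow_mul_gaussProd_le hθ (n - (2 * Nat.log 2 m + 1)) (Nat.log 2 m + 1)
  rw [show n - (2 * Nat.log 2 m + 1) + 2 * (Nat.log 2 m + 1) = n + 1 by omega] at hdecay
  have hm : (m : ℝ) < 2 ^ (Nat.log 2 m + 1) := mod_cast Nat.lt_pow_succ_log_self one_lt_two m
  nlinarith [gaussProd_pos hθ (n + 1)]

theorem cfDen_sub_le_natCast_mul_cfDen (hθ : Irrational θ) (hm : m ≠ 0) {n k : ℕ}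
    (hnk : cfDen θ (n + 1) < cfDen (m * θ) (k + 2)) :
    cfDen θ (n - (2 * Nat.log 2 m + 1) + 1) ≤ m * cfDen (m * θ) (k + 1) := by
  by_cases hn : 2 * Nat.log 2 m + 1 ≤ n
  · exact cfDen_le_natCast_mul_cfDen hθ hm hnk (natCast_mul_gaussProd_lt hθ m hn)
  · rw [Nat.sub_eq_zero_of_le (by omega), cfDen_one]
    exact one_le_mul_of_one_le_of_one_le (by omega) (one_le_cfDen_succ (hθ.natCast_mul hm) k)

theorem logDen_succ_sub_le_log (hθ : Irrational θ) {n : ℕ}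
    (hn : gaussProd θ n ≤ m * gaussProd θ (n + 1)) :
    logDen θ (n + 1) - logDen θ n ≤ Real.log (m + 1) := by
  have hB1 := gaussProd_pos hθ (n + 1)
  have hquot : (partialQuot θ n : ℝ) ≤ m := by
    have hfloor : (partialQuot θ n : ℝ) ≤ 1 / gaussIter θ n := Int.floor_le _
    rw [show 1 / gaussIter θ n = gaussProd θ n / gaussProd θ (n + 1) by
      rw [gaussProd_succ]; field_simp [(gaussProd_pos hθ n).ne']] at hfloor
    exact hfloor.trans ((div_le_iff₀ hB1).2 hn)
  have hq : (0 : ℝ) < cfDen θ (n + 1) := mod_cast one_le_cfDen_succ hθ n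
  have hq2 : (0 : ℝ) < cfDen θ (n + 2) := mod_cast one_le_cfDen_succ hθ (n + 1)
  have hq2_le : (cfDen θ (n + 2) : ℝ) ≤ (partialQuot θ n + 1) * cfDen θ (n + 1) :=
    mod_cast cfDen_le_partialQuot_add_one_mul hθ n
  rw [logDen, logDen, ← Real.log_div hq2.ne' hq.ne']
  refine Real.log_le_log (div_pos hq2 hq) ((div_le_iff₀ hq).2 ?_)
  nlinarith

theorem tsum_inv_cfDen_mul_overlap_le (hθ : Irrational θ) (hm : m ≠ 0) (n : ℕ) :
    ∑' k, ENNReal.ofReal ((cfDen (m * θ) (k + 1) : ℝ)⁻¹) *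
        ENNReal.ofReal (min (logDen (m * θ) (k + 1)) (logDen θ (n + 1))
          - max (logDen (m * θ) k) (logDen θ n))
      ≤ m * ENNReal.ofReal ((cfDen θ (n + 1) : ℝ)⁻¹ * (logDen θ (n + 1) - logDen θ n))
        + ENNReal.ofReal (m * Real.log (m + 1)) *
          ENNReal.ofReal ((cfDen θ (n - (2 * Nat.log 2 m + 1) + 1) : ℝ)⁻¹) := by
  have hmθ : Irrational (m * θ) := hθ.natCast_mul hm
  have hm1 : (1 : ℝ) ≤ m := mod_cast Nat.one_le_iff_ne_zero.2 hm
  have hv := monotone_logDen hmθ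
  have hv_top := tendsto_logDen hmθ
  have ha : logDen (m * θ) 0 ≤ logDen θ n := (logDen_zero _).trans_le (logDen_nonneg hθ n)
  have hab := monotone_logDen hθ n.le_succ
  have hbound (d : ℤ) (hd : 1 ≤ d)
      (hle : ∀ k, cfDen θ (n + 1) < cfDen (m * θ) (k + 2) → d ≤ m * cfDen (m * θ) (k + 1))
      (k : ℕ) (hk : logDen θ n < logDen (m * θ) (k + 1)) :
      (cfDen (m * θ) (k + 1) : ℝ)⁻¹ ≤ m / d := by
    have hqk : (0 : ℝ) < cfDen (m * θ) (k + 1) := mod_cast one_le_cfDen_succ hmθ k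
    have hd' : (0 : ℝ) < d := mod_cast hd
    have := hle k <| by
      exact_mod_cast (Real.log_lt_log_iff (mod_cast one_le_cfDen_succ hθ n)
        (mod_cast one_le_cfDen_succ hmθ (k + 1))).1 hk
    rw [inv_le_comm₀ hqk (by positivity), inv_div, div_le_iff₀ (by positivity), mul_comm]
    exact_mod_cast this
  by_cases hsmall : m * gaussProd θ (n + 1) < gaussProd θ n
  · have hq : (0 : ℝ) < cfDen θ (n + 1) := mod_cast one_le_cfDen_succ hθ n
    calc _ ≤ _ := ENNReal.tsum_ofReal_mul_min_sub_max_le hv hv_top ha hab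
          (hbound _ (one_le_cfDen_succ hθ n) fun k hk => cfDen_le_natCast_mul_cfDen hθ hm hk hsmall)
      _ = m * ENNReal.ofReal ((cfDen θ (n + 1) : ℝ)⁻¹ * (logDen θ (n + 1) - logDen θ n)) := by
        rw [← ENNReal.ofReal_natCast, ← ENNReal.ofReal_mul (by positivity),
          ← ENNReal.ofReal_mul (by positivity), div_eq_mul_inv, mul_assoc]
      _ ≤ _ := le_self_add
  · set d := cfDen θ (n - (2 * Nat.log 2 m + 1) + 1)
    have hd : (0 : ℝ) < d := mod_cast one_le_cfDen_succ hθ _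
    calc _ ≤ _ := ENNReal.tsum_ofReal_mul_min_sub_max_le hv hv_top ha hab
          (hbound d (one_le_cfDen_succ hθ _) fun k hk => cfDen_sub_le_natCast_mul_cfDen hθ hm hk)
      _ ≤ ENNReal.ofReal (m / d) * ENNReal.ofReal (Real.log (m + 1)) := by
        gcongr
        exact logDen_succ_sub_le_log hθ (not_lt.1 hsmall)
      _ = ENNReal.ofReal (m * Real.log (m + 1)) * ENNReal.ofReal (d : ℝ)⁻¹ := by
        rw [← ENNReal.ofReal_mul (div_nonneg (by positivity) hd.le),
          ← ENNReal.ofReal_mul (mul_nonneg (by positivity) (Real.log_nonneg (by linarith)))]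
        ring_nf
      _ ≤ _ := le_add_self

theorem denSum_natCast_mul_le (hθ : Irrational θ) (hm : m ≠ 0) :
    denSum (m * θ) ≤ m * denSum θ
      + ENNReal.ofReal (m * Real.log (m + 1)) * (2 * Nat.log 2 m + 1 + 8) := by
  have hmθ : Irrational (m * θ) := hθ.natCast_mul hm
  -- split the `k`-th term of `S(mθ)` along the intervals `[log q_n(θ), log q_{n+1}(θ)]`
  calc denSum (m * θ)
      = ∑' k, ∑' n, ENNReal.ofReal ((cfDen (m * θ) (k + 1) : ℝ)⁻¹) *
          ENNReal.ofReal (min (logDen (m * θ) (k + 1)) (logDen θ (n + 1))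
            - max (logDen (m * θ) k) (logDen θ n)) := by
        refine tsum_congr fun k => ?_
        have ha : logDen θ 0 ≤ logDen (m * θ) k := (logDen_zero _).trans_le (logDen_nonneg hmθ k)
        rw [ENNReal.tsum_mul_left, ENNReal.ofReal_mul (inv_nonneg.2 (mod_cast cfDen_nonneg hmθ _)),
          ← ENNReal.tsum_ofReal_min_sub_max (monotone_logDen hθ) (tendsto_logDen hθ) ha
            (monotone_logDen hmθ k.le_succ)]
        exact congrArg _ (tsum_congr fun n => by rw [min_comm, max_comm])
    _ = ∑' n, ∑' k, ENNReal.ofReal ((cfDen (m * θ) (k + 1) : ℝ)⁻¹) *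
          ENNReal.ofReal (min (logDen (m * θ) (k + 1)) (logDen θ (n + 1))
            - max (logDen (m * θ) k) (logDen θ n)) := ENNReal.tsum_comm
    _ ≤ ∑' n, (m * ENNReal.ofReal ((cfDen θ (n + 1) : ℝ)⁻¹ * (logDen θ (n + 1) - logDen θ n))
        + ENNReal.ofReal (m * Real.log (m + 1)) *
          ENNReal.ofReal ((cfDen θ (n - (2 * Nat.log 2 m + 1) + 1) : ℝ)⁻¹)) :=
        ENNReal.tsum_le_tsum fun n => tsum_inv_cfDen_mul_overlap_le hθ hm n
    _ ≤ _ := by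
        rw [ENNReal.tsum_add, ENNReal.tsum_mul_left, ENNReal.tsum_mul_left, denSum,
          ENNReal.tsum_comp_sub (fun j => ENNReal.ofReal ((cfDen θ (j + 1) : ℝ)⁻¹))]
        gcongr
        · simp
        · exact tsum_inv_cfDen_succ_le hθ

end Multiple

/-- For every positive integer `m` there is a constant `C_m` such that
`Y(mθ) ≤ m·Y(θ) + C_m` for all irrational `θ`. -/
theorem brjunoY_mul_upper_bound (m : ℕ) (hm : 0 < m) :
    ∃ C : ℝ, ∀ θ : ℝ, Irrational θ →
      brjunoY (m * θ) ≤ (m : ℝ≥0∞) * brjunoY θ + ENNReal.ofReal C := by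
  set E : ℝ≥0∞ := ENNReal.ofReal (m * Real.log (m + 1)) * (2 * Nat.log 2 m + 1 + 8)
  have hE : E ≠ ⊤ := by simp [E, ENNReal.mul_eq_top]
  refine ⟨(m * 12 + E + 4).toReal, fun θ hθ => ?_⟩
  rw [ENNReal.ofReal_toReal (by simp [hE, ENNReal.mul_eq_top])]
  calc brjunoY (m * θ) ≤ denSum (m * θ) + 4 := brjunoY_le_denSum (hθ.natCast_mul hm.ne')
    _ ≤ m * denSum θ + E + 4 := by gcongr; exact denSum_natCast_mul_le hθ hm.ne'
    _ ≤ m * (brjunoY θ + 12) + E + 4 := by gcongr; exact denSum_le_brjunoY hθ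
    _ = m * brjunoY θ + (m * 12 + E + 4) := by ring
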